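/- With the data of the free field construction of W_{q,t}(A(M,N)) as in the context, for every 1 ≤ i ≤ L+1 and every 1 ≤ j ≤ L, one has Σ_{k=1}^{L} λ_{i,k}(0) · A_{k,j}(0) = log(q_{i,j}/p_{i,j}); explicitly, the sum equals 0 if i ∉ {j, j+1}; equals −2·log x if i = j and ε_j = 1, and (2 − 2r)·log x if i = j and ε_j = 0; and equals 2·log x if i = j+1 and ε_{j+1} = 1, and (2r − 2)·log x if i = j+1 and ε_{j+1} = 0. (This states that the zero-mode coefficients (3.13) of Theorem 3.1 solve the mutual-locality linear system (3.17) of Lemma 3.5.) -/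

import Mathlib

/-- The entry `A_{k,l}(0)` (1-based indices) of the Gram matrix of the free field
construction of `W_{q,t}(A(M,N))`. -/
noncomputable def A0ent (r : ℝ) (ε : ℕ → Bool) (k l : ℕ) : ℝ :=
  if k = l then
    (if ε k ≠ ε (k + 1) then 1 else if ε (k + 1) then 2 / r else 2 * (r - 1) / r)
  else if l = k + 1 then (if ε l then -1 / r else (1 - r) / r)
  else if k = l + 1 then (if ε k then -1 / r else (1 - r) / r)
  else 0

/-- `d_j = r - 1` if `ε_j = 1` and `d_j = 1` if `ε_j = 0`. -/
noncomputable def dfun (r : ℝ) (ε : ℕ → Bool) (j : ℕ) : ℝ := if ε j then r - 1 else 1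

/-- `D(k,l) = Σ_{j=k+1}^{l+1} d_j` (and `D(k,l) = 0` for `k > l`). -/
noncomputable def Dfun (r : ℝ) (ε : ℕ → Bool) (k l : ℕ) : ℝ :=
  ∑ j ∈ Finset.Icc (k + 1) (l + 1), dfun r ε j

/-- The zero-mode coefficient `λ_{i,j}(0)` of Theorem 3.1 (formula (3.13)),
with `a = D(0,L)`. -/
noncomputable def lam0 (L : ℕ) (r x : ℝ) (ε : ℕ → Bool) (i j : ℕ) : ℝ :=
  if j < i then 2 * r * Real.log x / Dfun r ε 0 L * Dfun r ε 0 (j - 1)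
  else -(2 * r * Real.log x / Dfun r ε 0 L) * Dfun r ε j L

/-- The parameter `q_{i,j}` of Theorem 3.1 (nontrivial only for `i ∈ {j, j+1}`;
for other `i` one has `q_{i,j} = p_{i,j}`, here both normalized to `1`). -/
noncomputable def qijD (x r : ℝ) (ε : ℕ → Bool) (i j : ℕ) : ℝ :=
  if i = j then x ^ Dfun r ε 1 (j - 1)
  else if i = j + 1 then x ^ (2 * r + Dfun r ε 1 (j - 1))
  else 1

/-- The parameter `p_{i,j}` of Theorem 3.1 (nontrivial only for `i ∈ {j, j+1}`;
for other `i` one has `p_{i,j} = q_{i,j}`, here both normalized to `1`). -/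
noncomputable def pijD (x r : ℝ) (ε : ℕ → Bool) (i j : ℕ) : ℝ :=
  if i = j then
    (if j = 1 then (if ε 1 then x ^ (2 : ℝ) else x ^ (2 * r - 2))
     else x ^ Dfun r ε 1 (j - 2) * (if ε j then x ^ (r + 1) else x ^ (2 * r - 1)))
  else if i = j + 1 then
    x ^ Dfun r ε 1 (j - 1) * (if ε (j + 1) then x ^ (2 * r - 2) else x ^ (2 : ℝ))
  else 1

/-!
Extend the tridiagonal pattern of `A(0)` to all indices `k ≥ 0`. Its columns then sum to zero,
and `d_j A_{j-1,j}(0) = (1 - r)/r` does not depend on `j`; together these say that the column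
`j` of the extended matrix annihilates the weights `w_k = d_1 + ⋯ + d_k`. Now
`λ_{i,k}(0) = 2r log x (w_k / a - [i ≤ k])`, which vanishes at `k = 0` and at `k = L + 1`
(as `w_{L+1} = a`), so the truncation to `1 ≤ k ≤ L` is invisible and only the indicator
contributes: a partial column sum, namely `-A_{j-1,j}(0)` for `i = j`, `A_{j+1,j}(0)` for
`i = j + 1` and `0` otherwise. The values of `log (q_{i,j}/p_{i,j})` are read off directly.
-/

open Finset Real

/-- `A_{j-1,j}(0) = A_{j,j-1}(0)`. -/
noncomputable def A0off (r : ℝ) (ε : ℕ → Bool) (j : ℕ) : ℝ :=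
  if ε j then -1 / r else (1 - r) / r

/-- `w_k = d_1 + ⋯ + d_k`; unlike `Dfun r ε 0 (k - 1)` it is `0` at `k = 0`. -/
noncomputable def dsum (r : ℝ) (ε : ℕ → Bool) (k : ℕ) : ℝ :=
  ∑ m ∈ Icc 1 k, dfun r ε m

/-- The common value of both sides of (3.17). -/
noncomputable def localityRHS (r x : ℝ) (ε : ℕ → Bool) (i j : ℕ) : ℝ :=
  if i = j then (if ε j then -2 * log x else (2 - 2 * r) * log x)
  else if i = j + 1 then (if ε (j + 1) then 2 * log x else (2 * r - 2) * log x)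
  else 0

section

variable {r : ℝ} (ε : ℕ → Bool)

lemma Dfun_zero_left (l : ℕ) : Dfun r ε 0 l = dsum r ε (l + 1) := rfl

lemma Dfun_succ_right {k l : ℕ} (hk : k ≤ l + 1) :
    Dfun r ε k (l + 1) = Dfun r ε k l + dfun r ε (l + 2) :=
  sum_Icc_succ_top (by omega) _

lemma Dfun_one_zero : Dfun r ε 1 0 = 0 := by simp [Dfun]

lemma dsum_zero : dsum r ε 0 = 0 := by simp [dsum]

lemma dsum_succ (k : ℕ) : dsum r ε (k + 1) = dsum r ε k + dfun r ε (k + 1) :=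
  sum_Icc_succ_top (by omega) _

lemma Dfun_eq_dsum_sub {k L : ℕ} (hk : k ≤ L + 1) :
    Dfun r ε k L = dsum r ε (L + 1) - dsum r ε k := by
  rw [eq_sub_iff_add_eq', Dfun, dsum, dsum, Icc_add_one_left_eq_Ioc, ← Nat.zero_add 1,
    Icc_add_one_left_eq_Ioc]
  exact sum_Ioc_consecutive _ (Nat.zero_le k) hk

lemma dsum_pos (hr : 1 < r) {k : ℕ} (hk : 1 ≤ k) : 0 < dsum r ε k :=
  sum_pos (fun j _ => by unfold dfun; split <;> linarith) (nonempty_Icc.mpr hk)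

lemma A0ent_self_succ (m : ℕ) : A0ent r ε m (m + 1) = A0off r ε (m + 1) := by
  simp [A0ent, A0off]

lemma A0ent_succ_self (m : ℕ) : A0ent r ε (m + 1) m = A0off r ε (m + 1) := by
  rw [A0ent, if_neg (by omega), if_neg (by omega), if_pos rfl, A0off]

lemma A0ent_eq_zero {k l : ℕ} (h₁ : k ≠ l) (h₂ : l ≠ k + 1) (h₃ : k ≠ l + 1) :
    A0ent r ε k l = 0 := by
  simp [A0ent, h₁, h₂, h₃]

lemma dfun_mul_A0off (hr : r ≠ 0) (j : ℕ) : dfun r ε j * A0off r ε j = (1 - r) / r := by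
  unfold dfun A0off
  split
  · field_simp; ring
  · field_simp

lemma A0ent_column_sum (hr : r ≠ 0) (m : ℕ) :
    A0ent r ε m (m + 1) + A0ent r ε (m + 1) (m + 1) + A0ent r ε (m + 2) (m + 1) = 0 := by
  rw [A0ent_self_succ, A0ent_succ_self]
  simp only [A0ent, A0off, if_true]
  cases ε (m + 1) <;> cases ε (m + 2) <;> simp <;> field_simp <;> ring

lemma sum_Icc_mul_A0ent {f : ℕ → ℝ} {L m : ℕ} (hf₀ : f 0 = 0) (hf₁ : f (L + 1) = 0)
    (hm : m + 1 ≤ L) :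
    ∑ k ∈ Icc 1 L, f k * A0ent r ε k (m + 1) =
      f m * A0ent r ε m (m + 1) + f (m + 1) * A0ent r ε (m + 1) (m + 1)
        + f (m + 2) * A0ent r ε (m + 2) (m + 1) := by
  have h_ext : ∑ k ∈ Icc 1 L, f k * A0ent r ε k (m + 1) =
      ∑ k ∈ Icc 0 (L + 1), f k * A0ent r ε k (m + 1) := by
    refine sum_subset (Icc_subset_Icc (by omega) (by omega)) fun k hk hk' => ?_
    simp only [mem_Icc, not_and_or] at hk hk'
    obtain rfl | rfl : k = 0 ∨ k = L + 1 := by omega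
    all_goals simp [hf₀, hf₁]
  have h_band : ∑ k ∈ {m, m + 1, m + 2}, f k * A0ent r ε k (m + 1) =
      ∑ k ∈ Icc 0 (L + 1), f k * A0ent r ε k (m + 1) := by
    refine sum_subset (fun k hk => ?_) fun k _ hk => ?_
    · simp only [mem_insert, mem_singleton] at hk
      simp only [mem_Icc]
      omega
    · simp only [mem_insert, mem_singleton, not_or] at hk
      rw [A0ent_eq_zero ε (by omega) (by omega) (by omega), mul_zero]
  rw [h_ext, ← h_band, sum_insert (by simp), sum_insert (by simp), sum_singleton, add_assoc]

lemma column_apply_dsum (hr : r ≠ 0) (m : ℕ) :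
    dsum r ε m * A0ent r ε m (m + 1) + dsum r ε (m + 1) * A0ent r ε (m + 1) (m + 1)
      + dsum r ε (m + 2) * A0ent r ε (m + 2) (m + 1) = 0 := by
  have h_col := A0ent_column_sum ε hr m
  rw [dsum_succ ε (m + 1), dsum_succ ε m, A0ent_self_succ, A0ent_succ_self] at *
  linear_combination (dsum r ε m + dfun r ε (m + 1)) * h_col
    - dfun_mul_A0off ε hr (m + 1) + dfun_mul_A0off ε hr (m + 2)

lemma column_apply_indicator (hr : r ≠ 0) (i m : ℕ) :
    (if i ≤ m then 1 else 0) * A0ent r ε m (m + 1)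
      + (if i ≤ m + 1 then 1 else 0) * A0ent r ε (m + 1) (m + 1)
      + (if i ≤ m + 2 then 1 else 0) * A0ent r ε (m + 2) (m + 1) =
      if i = m + 1 then -A0off r ε (m + 1) else if i = m + 2 then A0off r ε (m + 2) else 0 := by
  have h_col := A0ent_column_sum ε hr m
  rw [A0ent_self_succ, A0ent_succ_self] at *
  split_ifs <;> first | omega | linarith

end

lemma lam0_eq {L : ℕ} {r : ℝ} (x : ℝ) (ε : ℕ → Bool) (ha : dsum r ε (L + 1) ≠ 0)
    {i k : ℕ} (hk : 1 ≤ k) (hkL : k ≤ L + 1) :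
    lam0 L r x ε i k =
      2 * r * log x * (dsum r ε k / dsum r ε (L + 1) - if i ≤ k then 1 else 0) := by
  obtain ⟨l, rfl⟩ : ∃ l, k = l + 1 := ⟨k - 1, by omega⟩
  rw [lam0, Dfun_zero_left, Dfun_zero_left, Dfun_eq_dsum_sub ε hkL, Nat.add_sub_cancel]
  split_ifs <;> first | omega | (field_simp; ring)

lemma sum_lam0_mul_A0ent {L : ℕ} {r : ℝ} (x : ℝ) (ε : ℕ → Bool) (hr : 1 < r) {i m : ℕ}
    (hi : 1 ≤ i) (hiL : i ≤ L + 1) (hm : m + 1 ≤ L) :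
    ∑ k ∈ Icc 1 L, lam0 L r x ε i k * A0ent r ε k (m + 1) = localityRHS r x ε i (m + 1) := by
  have hr₀ : r ≠ 0 := (zero_lt_one.trans hr).ne'
  have ha : dsum r ε (L + 1) ≠ 0 := (dsum_pos ε hr (Nat.le_add_left 1 L)).ne'
  set g : ℕ → ℝ := fun k => dsum r ε k / dsum r ε (L + 1) - if i ≤ k then 1 else 0
  have h_lam : ∀ k ∈ Icc 1 L,
      lam0 L r x ε i k * A0ent r ε k (m + 1) = 2 * r * log x * (g k * A0ent r ε k (m + 1)) := by
    intro k hk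
    rw [mem_Icc] at hk
    rw [lam0_eq x ε ha hk.1 (by omega), mul_assoc]
  have hg₀ : g 0 = 0 := by simp [g, dsum_zero]; omega
  have hg₁ : g (L + 1) = 0 := by simp [g, ha, hiL]
  rw [sum_congr rfl h_lam, ← mul_sum, sum_Icc_mul_A0ent ε hg₀ hg₁ hm]
  calc _ = 2 * r * log x * -(if i = m + 1 then -A0off r ε (m + 1)
          else if i = m + 2 then A0off r ε (m + 2) else 0) := by
        linear_combination (2 * r * log x / dsum r ε (L + 1)) * column_apply_dsum ε hr₀ m
          - 2 * r * log x * column_apply_indicator ε hr₀ i m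
    _ = localityRHS r x ε i (m + 1) := by
        unfold localityRHS A0off
        split_ifs <;> first | omega | ring1 | (field_simp; ring1) | field_simp

lemma log_rpow_div_rpow {x : ℝ} (hx : 0 < x) (a b : ℝ) :
    log (x ^ a / x ^ b) = (a - b) * log x := by
  rw [← rpow_sub hx, log_rpow hx]

lemma log_qijD_div_pijD {x : ℝ} (r : ℝ) (ε : ℕ → Bool) (hx : 0 < x) {i j : ℕ}
    (hj : 1 ≤ j) :
    log (qijD x r ε i j / pijD x r ε i j) = localityRHS r x ε i j := by
  unfold localityRHS qijD pijD
  rcases eq_or_ne i j with rfl | hij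
  · simp only [if_true]
    rcases eq_or_ne i 1 with rfl | hi
    · cases ε 1 <;>
        simp only [if_true, if_false, Bool.false_eq_true, Nat.sub_self, Dfun_one_zero,
          log_rpow_div_rpow hx] <;> ring
    · obtain ⟨m, rfl⟩ : ∃ m, i = m + 2 := ⟨i - 2, by omega⟩
      rw [if_neg hi, Nat.add_sub_cancel, show m + 2 - 1 = m + 1 by omega,
        Dfun_succ_right ε (by omega)]
      cases h : ε (m + 2) <;>
        simp only [h, dfun, if_true, if_false, Bool.false_eq_true, ← rpow_add hx,
          log_rpow_div_rpow hx] <;> ring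
  · rcases eq_or_ne i (j + 1) with rfl | hij'
    · simp only [if_neg hij, if_true]
      cases ε (j + 1) <;>
        simp only [if_true, if_false, Bool.false_eq_true, ← rpow_add hx,
          log_rpow_div_rpow hx] <;> ring
    · simp [hij, hij']

theorem statement12_general (L : ℕ) (r x : ℝ) (hr : 1 < r) (hx0 : 0 < x)
    (ε : ℕ → Bool) :
    ∀ i ∈ Finset.Icc 1 (L + 1), ∀ j ∈ Finset.Icc 1 L,
      (∑ k ∈ Finset.Icc 1 L, lam0 L r x ε i k * A0ent r ε k j) =
          Real.log (qijD x r ε i j / pijD x r ε i j) ∧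
        (i ≠ j → i ≠ j + 1 →
          (∑ k ∈ Finset.Icc 1 L, lam0 L r x ε i k * A0ent r ε k j) = 0) ∧
        (i = j →
          (∑ k ∈ Finset.Icc 1 L, lam0 L r x ε i k * A0ent r ε k j) =
            (if ε j then -2 * Real.log x else (2 - 2 * r) * Real.log x)) ∧
        (i = j + 1 →
          (∑ k ∈ Finset.Icc 1 L, lam0 L r x ε i k * A0ent r ε k j) =
            (if ε (j + 1) then 2 * Real.log x else (2 * r - 2) * Real.log x)) := by
  intro i hi j hj
  rw [mem_Icc] at hi hj
  obtain ⟨m, rfl⟩ : ∃ m, j = m + 1 := ⟨j - 1, by omega⟩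
  rw [sum_lam0_mul_A0ent x ε hr hi.1 hi.2 hj.2, log_qijD_div_pijD r ε hx0 hj.1]
  refine ⟨rfl, fun h₁ h₂ => by simp [localityRHS, h₁, h₂], ?_, ?_⟩ <;>
    rintro rfl <;> simp [localityRHS]

/-- The zero-mode coefficients (3.13) of Theorem 3.1 solve the mutual-locality linear
system (3.17) of Lemma 3.5: `Σ_{k=1}^{L} λ_{i,k}(0) A_{k,j}(0) = log(q_{i,j}/p_{i,j})`,
with the explicit values `0` for `i ∉ {j, j+1}`, `-2 log x` resp. `(2-2r) log x` for
`i = j` (according to `ε_j = 1` resp. `ε_j = 0`), and `2 log x` resp. `(2r-2) log x` for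
`i = j+1` (according to `ε_{j+1} = 1` resp. `ε_{j+1} = 0`). -/
theorem statement12 (L : ℕ) (hL : 1 ≤ L) (r x : ℝ) (hr : 1 < r) (hx0 : 0 < x) (hx1 : x < 1)
    (ε : ℕ → Bool) :
    ∀ i ∈ Finset.Icc 1 (L + 1), ∀ j ∈ Finset.Icc 1 L,
      (∑ k ∈ Finset.Icc 1 L, lam0 L r x ε i k * A0ent r ε k j) =
          Real.log (qijD x r ε i j / pijD x r ε i j) ∧
        (i ≠ j → i ≠ j + 1 →
          (∑ k ∈ Finset.Icc 1 L, lam0 L r x ε i k * A0ent r ε k j) = 0) ∧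
        (i = j →
          (∑ k ∈ Finset.Icc 1 L, lam0 L r x ε i k * A0ent r ε k j) =
            (if ε j then -2 * Real.log x else (2 - 2 * r) * Real.log x)) ∧
        (i = j + 1 →
          (∑ k ∈ Finset.Icc 1 L, lam0 L r x ε i k * A0ent r ε k j) =
            (if ε (j + 1) then 2 * Real.log x else (2 * r - 2) * Real.log x)) :=
  statement12_general L r x hr hx0 ε
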